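/- arXiv:2410.10673 — 5 statements merged into one kernel-verified Lean document; each statement's English description precedes it below -/
import Mathlib

section
/- Let d denote the toroidal distance on the flat unit square torus, i.e. for points p, q ∈ ℝ², d(p,q) = min over (m,n) ∈ ℤ² of the Euclidean norm ‖p − q + (m,n)‖. Let p₁ = (−2/5, 2/5), p₂ = (−1/5, 0), p₃ = (0, −2/5), p₄ = (2/5, −1/5), p₅ = (1/5, 1/5). Then for every pair of distinct indices i ≠ j in {1,…,5}, d(pᵢ, pⱼ) = 1/√5. -/
/-- The toroidal distance on the flat unit square torus: the infimum over integer
translates `(m, n) ∈ ℤ²` of the Euclidean norm of `p - q + (m, n)`. -/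
noncomputable def torusDist (p q : ℝ × ℝ) : ℝ :=
  sInf {d : ℝ | ∃ m n : ℤ,
    d = Real.sqrt ((p.1 - q.1 + (m : ℝ)) ^ 2 + (p.2 - q.2 + (n : ℝ)) ^ 2)}

/-- The five centers of the `K₅` toroidal penny graph embedding. -/
noncomputable def K5pts : Fin 5 → ℝ × ℝ :=
  ![(-2/5, 2/5), (-1/5, 0), (0, -2/5), (2/5, -1/5), (1/5, 1/5)]

def Atype (x : ℝ) : Prop := x = 1/5 ∨ x = -1/5 ∨ x = 4/5 ∨ x = -4/5
def Btype (x : ℝ) : Prop := x = 2/5 ∨ x = -2/5 ∨ x = 3/5 ∨ x = -3/5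

lemma sq_bound {x c : ℝ} (hx1 : -1 ≤ x) (hx2 : x ≤ 1) (_hc : c ≤ 1)
    (h0 : c ≤ x ^ 2) (h1 : c ≤ (x + 1) ^ 2) (hm1 : c ≤ (x - 1) ^ 2) :
    ∀ m : ℤ, c ≤ (x + m) ^ 2 := by
  intro m
  rcases le_or_gt 2 m with h | h
  · have h' : (2:ℝ) ≤ (m:ℝ) := by exact_mod_cast h
    nlinarith
  rcases le_or_gt m (-2) with h' | h'
  · have h'' : (m:ℝ) ≤ -2 := by exact_mod_cast h'
    nlinarith
  · have : m = -1 ∨ m = 0 ∨ m = 1 := by omega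
    rcases this with rfl | rfl | rfl <;> push_cast <;> nlinarith

lemma sqA {x : ℝ} (h : Atype x) : ∀ m : ℤ, (1/25 : ℝ) ≤ (x + m) ^ 2 := by
  rcases h with h | h | h | h <;> subst h <;>
    exact sq_bound (by norm_num) (by norm_num) (by norm_num)
      (by norm_num) (by norm_num) (by norm_num)

lemma sqB {x : ℝ} (h : Btype x) : ∀ m : ℤ, (4/25 : ℝ) ≤ (x + m) ^ 2 := by
  rcases h with h | h | h | h <;> subst h <;>
    exact sq_bound (by norm_num) (by norm_num) (by norm_num)
      (by norm_num) (by norm_num) (by norm_num)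

lemma existA {x : ℝ} (h : Atype x) : ∃ m : ℤ, (x + m) ^ 2 = (1/25 : ℝ) := by
  rcases h with h | h | h | h <;> subst h
  · exact ⟨0, by norm_num⟩
  · exact ⟨0, by norm_num⟩
  · exact ⟨-1, by norm_num⟩
  · exact ⟨1, by norm_num⟩

lemma existB {x : ℝ} (h : Btype x) : ∃ m : ℤ, (x + m) ^ 2 = (4/25 : ℝ) := by
  rcases h with h | h | h | h <;> subst h
  · exact ⟨0, by norm_num⟩
  · exact ⟨0, by norm_num⟩
  · exact ⟨-1, by norm_num⟩
  · exact ⟨1, by norm_num⟩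

lemma torusDist_eq (p q : ℝ × ℝ)
    (h : (Atype (p.1 - q.1) ∧ Btype (p.2 - q.2)) ∨ (Btype (p.1 - q.1) ∧ Atype (p.2 - q.2))) :
    torusDist p q = 1 / Real.sqrt 5 := by
  have key : (1:ℝ) / Real.sqrt 5 = Real.sqrt (1/5) := by
    rw [one_div, one_div, ← Real.sqrt_inv]
  have hex : ∃ m n : ℤ, (p.1 - q.1 + (m:ℝ)) ^ 2 + (p.2 - q.2 + (n:ℝ)) ^ 2 = 1/5 := by
    rcases h with ⟨hx, hy⟩ | ⟨hx, hy⟩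
    · obtain ⟨m, hm⟩ := existA hx
      obtain ⟨n, hn⟩ := existB hy
      exact ⟨m, n, by rw [hm, hn]; norm_num⟩
    · obtain ⟨m, hm⟩ := existB hx
      obtain ⟨n, hn⟩ := existA hy
      exact ⟨m, n, by rw [hm, hn]; norm_num⟩
  have hlb : ∀ m n : ℤ, (1/5 : ℝ) ≤ (p.1 - q.1 + (m:ℝ)) ^ 2 + (p.2 - q.2 + (n:ℝ)) ^ 2 := by
    intro m n
    rcases h with ⟨hx, hy⟩ | ⟨hx, hy⟩
    · have := sqA hx m; have := sqB hy n; linarith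
    · have := sqB hx m; have := sqA hy n; linarith
  obtain ⟨m, n, hmn⟩ := hex
  unfold torusDist
  apply le_antisymm
  · apply csInf_le
    · exact ⟨0, fun d ⟨m', n', hd⟩ => hd ▸ Real.sqrt_nonneg _⟩
    · exact ⟨m, n, by rw [hmn]; exact key⟩
  · apply le_csInf
    · exact ⟨_, m, n, rfl⟩
    rintro d ⟨m', n', rfl⟩
    rw [key]
    exact Real.sqrt_le_sqrt (hlb m' n')

theorem K5_toroidal_distances :
    ∀ i j : Fin 5, i ≠ j → torusDist (K5pts i) (K5pts j) = 1 / Real.sqrt 5 := by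
  intro i j hij
  apply torusDist_eq
  fin_cases i <;> fin_cases j <;> simp_all [K5pts, Atype, Btype] <;> norm_num
end

section
/- There exist five points on the flat unit square torus (i.e. five points in ℝ² considered modulo ℤ², pairwise distinct in the quotient) such that the toroidal distance between every pair of distinct points equals 1/√5. Consequently, placing circles of diameter 1/√5 at these centers gives a packing of 5 equal circles on the unit torus in which every two circles are tangent, so the complete graph K₅ is realized as a toroidal penny graph. -/
lemma key_lb (d m n : ℤ) (h0 : d ≠ 0) (h1 : -5 < d) (h2 : d < 5) :
    5 ≤ (d + 5*m)^2 + (2*d + 5*n)^2 := by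
  have hx : d + 5*m ≤ -1 ∨ 1 ≤ d + 5*m := by omega
  have hy : 2*d + 5*n ≤ -1 ∨ 1 ≤ 2*d + 5*n := by omega
  have h4 : (d + 5*m ≤ -2 ∨ 2 ≤ d + 5*m) ∨ (2*d + 5*n ≤ -2 ∨ 2 ≤ 2*d + 5*n) := by omega
  rcases hx with hx | hx <;> rcases hy with hy | hy <;>
    rcases h4 with (h | h) | (h | h) <;> nlinarith

lemma key_ach (d : ℤ) (h0 : d ≠ 0) (h1 : -5 < d) (h2 : d < 5) :
    ∃ m n : ℤ, (d + 5*m)^2 + (2*d + 5*n)^2 = 5 := by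
  interval_cases d
  · exact ⟨1, 2, by norm_num⟩
  · exact ⟨1, 1, by norm_num⟩
  · exact ⟨0, 1, by norm_num⟩
  · exact ⟨0, 0, by norm_num⟩
  · exact absurd rfl h0
  · exact ⟨0, 0, by norm_num⟩
  · exact ⟨0, -1, by norm_num⟩
  · exact ⟨-1, -1, by norm_num⟩
  · exact ⟨-1, -2, by norm_num⟩

/-- There exist five points on the flat unit square torus, pairwise distinct in the
quotient `ℝ²/ℤ²`, with all pairwise toroidal distances equal to `1/√5`; hence the
contact graph of the corresponding packing of 5 circles of diameter `1/√5`
(tangency = toroidal distance between centers equals the diameter) is the complete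
graph `K₅`, i.e. `K₅` is a toroidal penny graph. -/
theorem K5_is_toroidal_penny_graph :
    ∃ p : Fin 5 → ℝ × ℝ,
      (∀ i j : Fin 5, i ≠ j → torusDist (p i) (p j) ≠ 0) ∧
      (∀ i j : Fin 5, i ≠ j → torusDist (p i) (p j) = 1 / Real.sqrt 5) ∧
      Nonempty
        ((SimpleGraph.fromRel fun i j =>
            torusDist (p i) (p j) = 1 / Real.sqrt 5) ≃g SimpleGraph.completeGraph (Fin 5)) := by
  have sqrt5_pos : (0:ℝ) < Real.sqrt 5 := Real.sqrt_pos.2 (by norm_num)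
  set p : Fin 5 → ℝ × ℝ := fun k => ((k.val : ℝ)/5, 2*(k.val : ℝ)/5) with hp
  have hdist : ∀ i j : Fin 5, i ≠ j → torusDist (p i) (p j) = 1 / Real.sqrt 5 := by
    intro i j hij
    set d : ℤ := (i.val : ℤ) - (j.val : ℤ) with hd
    have hvne : i.val ≠ j.val := fun h => hij (Fin.ext h)
    have hd0 : d ≠ 0 := by omega
    have hi5 := i.isLt
    have hj5 := j.isLt
    have hdl : -5 < d := by omega
    have hdr : d < 5 := by omega
    have harg : ∀ m n : ℤ,
        ((p i).1 - (p j).1 + (m:ℝ))^2 + ((p i).2 - (p j).2 + (n:ℝ))^2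
        = ((((d + 5*m : ℤ) : ℝ))^2 + (((2*d + 5*n : ℤ) : ℝ))^2) / 25 := by
      intro m n
      simp only [hp, hd]
      push_cast
      ring
    have hsqrt15 : Real.sqrt (1/5 : ℝ) = 1 / Real.sqrt 5 := by
      rw [one_div, one_div, ← Real.sqrt_inv]
    have hmem : (1 / Real.sqrt 5 : ℝ) ∈ {x : ℝ | ∃ m n : ℤ,
        x = Real.sqrt (((p i).1 - (p j).1 + (m:ℝ))^2 + ((p i).2 - (p j).2 + (n:ℝ))^2)} := by
      obtain ⟨m, n, hmn⟩ := key_ach d hd0 hdl hdr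
      refine ⟨m, n, ?_⟩
      rw [harg m n]
      rw [show ((((d + 5*m : ℤ) : ℝ))^2 + (((2*d + 5*n : ℤ) : ℝ))^2) = (5:ℝ) by
        exact_mod_cast congrArg (Int.cast : ℤ → ℝ) hmn]
      norm_num [hsqrt15]
    have hlb : ∀ x ∈ {x : ℝ | ∃ m n : ℤ,
        x = Real.sqrt (((p i).1 - (p j).1 + (m:ℝ))^2 + ((p i).2 - (p j).2 + (n:ℝ))^2)},
        1 / Real.sqrt 5 ≤ x := by
      rintro x ⟨m, n, rfl⟩
      rw [harg m n, ← hsqrt15]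
      apply Real.sqrt_le_sqrt
      have h := key_lb d m n hd0 hdl hdr
      have h' : (5:ℝ) ≤ (((d + 5*m : ℤ) : ℝ))^2 + (((2*d + 5*n : ℤ) : ℝ))^2 := by
        exact_mod_cast h
      linarith
    exact le_antisymm (csInf_le ⟨1 / Real.sqrt 5, hlb⟩ hmem) (le_csInf ⟨_, hmem⟩ hlb)
  refine ⟨p, ?_, hdist, ?_⟩
  · intro i j hij
    rw [hdist i j hij]
    positivity
  · refine ⟨⟨Equiv.refl _, ?_⟩⟩
    intro a b
    rw [SimpleGraph.fromRel_adj]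
    simp only [Equiv.refl_apply, SimpleGraph.completeGraph, SimpleGraph.top_adj]
    exact ⟨fun h => ⟨h, Or.inl (hdist a b h)⟩, fun h => h.1⟩
end

section
/- Let d denote the toroidal distance on the flat unit square torus. Let q₁ = (13/36, −13/36), q₂ = (11/36, 1/36), q₃ = (1/36, 11/36), q₄ = (−13/36, 13/36), q₅ = (−11/36, −1/36), q₆ = (−1/36, −11/36). Then for every i ∈ {1, 3, 5} and every j ∈ {2, 4, 6}, d(qᵢ, qⱼ) = 5√2/18. -/
/-- The six centers of the `K₃,₃` toroidal penny graph embedding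
(`q₁, …, q₆` are indexed by `0, …, 5`). -/
noncomputable def K33pts : Fin 6 → ℝ × ℝ :=
  ![(13/36, -13/36), (11/36, 1/36), (1/36, 11/36),
    (-13/36, 13/36), (-11/36, -1/36), (-1/36, -11/36)]

private lemma sq_add_int_ge {x : ℝ} (hx : |x| ≤ 1/2) (m : ℤ) : x ^ 2 ≤ (x + m) ^ 2 := by
  rcases eq_or_ne m 0 with h | h
  · simp [h]
  · have hm : (1 : ℝ) ≤ |(m : ℝ)| := by
      rw [← Int.cast_abs]
      exact_mod_cast Int.one_le_abs h
    have : |x| ≤ |x + m| := by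
      have : |(m : ℝ)| - |x| ≤ |x + m| := by
        calc |(m : ℝ)| - |x| ≤ |(m : ℝ)| - |(-x)| := by rw [abs_neg]
        _ ≤ |(m : ℝ) - (-x)| := abs_sub_abs_le_abs_sub _ _
        _ = |x + m| := by ring_nf
      linarith
    calc x ^ 2 = |x| ^ 2 := (sq_abs x).symm
    _ ≤ |x + m| ^ 2 := by gcongr
    _ = (x + m) ^ 2 := sq_abs _

private lemma torusDist_eq_s2 (p q : ℝ × ℝ) (a b : ℝ) (ka kb : ℤ)
    (h1 : p.1 - q.1 = a + ka) (h2 : p.2 - q.2 = b + kb)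
    (ha : |a| ≤ 1/2) (hb : |b| ≤ 1/2) :
    torusDist p q = Real.sqrt (a ^ 2 + b ^ 2) := by
  unfold torusDist
  apply le_antisymm
  · apply csInf_le
    · exact ⟨0, fun d ⟨m, n, hd⟩ => hd ▸ Real.sqrt_nonneg _⟩
    · exact ⟨-ka, -kb, by rw [h1, h2]; push_cast; ring_nf⟩
  · refine le_csInf ⟨_, 0, 0, rfl⟩ ?_
    rintro d ⟨m, n, rfl⟩
    apply Real.sqrt_le_sqrt
    rw [h1, h2]
    have e1 : a + (ka : ℝ) + m = a + ((ka + m : ℤ) : ℝ) := by push_cast; ring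
    have e2 : b + (kb : ℝ) + n = b + ((kb + n : ℤ) : ℝ) := by push_cast; ring
    rw [e1, e2]
    exact add_le_add (sq_add_int_ge ha _) (sq_add_int_ge hb _)

private lemma sqrt_target (x : ℝ) (hx : x = 25 / 162) :
    Real.sqrt x = 5 * Real.sqrt 2 / 18 := by
  rw [hx, show (25 / 162 : ℝ) = (5 / 18) ^ 2 * 2 by norm_num,
    Real.sqrt_mul (sq_nonneg _), Real.sqrt_sq (by norm_num : (0:ℝ) ≤ 5/18)]
  ring

private lemma K0 : K33pts 0 = (13/36, -13/36) := rfl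
private lemma K1 : K33pts 1 = (11/36, 1/36) := rfl
private lemma K2 : K33pts 2 = (1/36, 11/36) := rfl
private lemma K3 : K33pts 3 = (-13/36, 13/36) := rfl
private lemma K4 : K33pts 4 = (-11/36, -1/36) := rfl
private lemma K5 : K33pts 5 = (-1/36, -11/36) := rfl

/-- For every `i ∈ {1, 3, 5}` (indices `0, 2, 4`) and `j ∈ {2, 4, 6}` (indices
`1, 3, 5`), the toroidal distance between `qᵢ` and `qⱼ` equals `5√2/18`. -/
theorem K33_cross_distances :
    ∀ i j : Fin 6, i.val % 2 = 0 → j.val % 2 = 1 →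
      torusDist (K33pts i) (K33pts j) = 5 * Real.sqrt 2 / 18 := by
  intro i j hi hj
  fin_cases i <;> fin_cases j <;> simp_all <;>
    [ (rw [torusDist_eq_s2 _ _ (1/18) (-7/18) 0 0]);
      (rw [torusDist_eq_s2 _ _ (-5/18) (5/18) 1 (-1)]);
      (rw [torusDist_eq_s2 _ _ (7/18) (-1/18) 0 0]);
      (rw [torusDist_eq_s2 _ _ (-5/18) (5/18) 0 0]);
      (rw [torusDist_eq_s2 _ _ (7/18) (-1/18) 0 0]);
      (rw [torusDist_eq_s2 _ _ (1/18) (-7/18) 0 1]);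
      (rw [torusDist_eq_s2 _ _ (7/18) (-1/18) (-1) 0]);
      (rw [torusDist_eq_s2 _ _ (1/18) (-7/18) 0 0]);
      (rw [torusDist_eq_s2 _ _ (-5/18) (5/18) 0 0])] <;>
  all_goals first
    | exact sqrt_target _ (by norm_num)
    | norm_num [abs_le, K0, K1, K2, K3, K4, K5]
end

section
/- There exist six points on the flat unit square torus (pairwise distinct in the quotient ℝ²/ℤ²) whose minimum pairwise toroidal distance equals 5√2/18, and such that the graph on these six points with an edge between two points exactly when their toroidal distance equals 5√2/18 is isomorphic to the complete bipartite graph K₃,₃. Consequently K₃,₃ is realizable as a toroidal penny graph with circles of diameter 5√2/18 on the unit square torus. -/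
lemma sq_le_sq_int (a : ℝ) (k0 k : ℤ) (h : |a + (k0:ℝ)| ≤ 1/2) :
    (a + (k0:ℝ))^2 ≤ (a + (k:ℝ))^2 := by
  rcases eq_or_ne k k0 with rfl | hne
  · exact le_refl _
  · have h1 : (1:ℝ) ≤ |(k:ℝ) - (k0:ℝ)| := by
      have h0 : (1:ℤ) ≤ |k - k0| := Int.one_le_abs (sub_ne_zero.mpr hne)
      have h2 : ((1:ℤ):ℝ) ≤ ((|k - k0| : ℤ) : ℝ) := by exact_mod_cast h0
      push_cast at h2
      exact h2
    nlinarith [sq_abs ((k:ℝ) - k0), neg_abs_le ((a + (k0:ℝ)) * ((k:ℝ) - k0)),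
      abs_mul (a + (k0:ℝ)) ((k:ℝ) - k0), abs_nonneg ((k:ℝ) - k0), abs_nonneg (a + (k0:ℝ))]

lemma tdist {x1 y1 x2 y2 : ℝ} (m0 n0 : ℤ) (h1 : |x1 - x2 + (m0:ℝ)| ≤ 1/2)
    (h2 : |y1 - y2 + (n0:ℝ)| ≤ 1/2) :
    torusDist (x1, y1) (x2, y2)
      = Real.sqrt ((x1 - x2 + (m0:ℝ)) ^ 2 + (y1 - y2 + (n0:ℝ)) ^ 2) := by
  apply IsLeast.csInf_eq
  constructor
  · exact ⟨m0, n0, rfl⟩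
  · rintro d ⟨m, n, rfl⟩
    apply Real.sqrt_le_sqrt
    have := sq_le_sq_int (x1 - x2) m0 m h1
    have := sq_le_sq_int (y1 - y2) n0 n h2
    linarith

lemma torusDist_symm (p q : ℝ × ℝ) : torusDist p q = torusDist q p := by
  unfold torusDist
  congr 1
  ext d
  constructor <;> rintro ⟨m, n, rfl⟩ <;>
    exact ⟨-m, -n, by push_cast; congr 1 <;> ring⟩

lemma sqrtEq {x c : ℝ} (hc : 0 ≤ c) (h : x = c^2) : Real.sqrt x = c := by
  rw [h, Real.sqrt_sq hc]

lemma torusDist_self (p : ℝ × ℝ) : torusDist p p = 0 := by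
  have h : torusDist (p.1, p.2) (p.1, p.2)
      = Real.sqrt ((p.1 - p.1 + ((0:ℤ):ℝ))^2 + (p.2 - p.2 + ((0:ℤ):ℝ))^2) :=
    tdist 0 0 (by norm_num) (by norm_num)
  simpa using h

noncomputable def pts : Fin 6 → ℝ × ℝ :=
  ![(0, 0), (6/18, 6/18), (12/18, 12/18), (5/18, 13/18), (11/18, 1/18), (17/18, 7/18)]

lemma d01 : torusDist (pts 0) (pts 1) = Real.sqrt 2/3 := by
  have h2 : Real.sqrt 2 ^ 2 = 2 := Real.sq_sqrt (by norm_num)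
  show torusDist ((0 : ℝ), (0 : ℝ)) ((6/18 : ℝ), (6/18 : ℝ)) = Real.sqrt 2/3
  refine (tdist (0) (0) (by norm_num [abs_le]) (by norm_num [abs_le])).trans (sqrtEq (by positivity) ?_)
  push_cast; linear_combination (-1/9)*h2

lemma d02 : torusDist (pts 0) (pts 2) = Real.sqrt 2/3 := by
  have h2 : Real.sqrt 2 ^ 2 = 2 := Real.sq_sqrt (by norm_num)
  show torusDist ((0 : ℝ), (0 : ℝ)) ((12/18 : ℝ), (12/18 : ℝ)) = Real.sqrt 2/3
  refine (tdist (1) (1) (by norm_num [abs_le]) (by norm_num [abs_le])).trans (sqrtEq (by positivity) ?_)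
  push_cast; linear_combination (-1/9)*h2

lemma d03 : torusDist (pts 0) (pts 3) = 5*Real.sqrt 2/18 := by
  have h2 : Real.sqrt 2 ^ 2 = 2 := Real.sq_sqrt (by norm_num)
  show torusDist ((0 : ℝ), (0 : ℝ)) ((5/18 : ℝ), (13/18 : ℝ)) = 5*Real.sqrt 2/18
  refine (tdist (0) (1) (by norm_num [abs_le]) (by norm_num [abs_le])).trans (sqrtEq (by positivity) ?_)
  push_cast; linear_combination (-25/324)*h2

lemma d04 : torusDist (pts 0) (pts 4) = 5*Real.sqrt 2/18 := by
  have h2 : Real.sqrt 2 ^ 2 = 2 := Real.sq_sqrt (by norm_num)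
  show torusDist ((0 : ℝ), (0 : ℝ)) ((11/18 : ℝ), (1/18 : ℝ)) = 5*Real.sqrt 2/18
  refine (tdist (1) (0) (by norm_num [abs_le]) (by norm_num [abs_le])).trans (sqrtEq (by positivity) ?_)
  push_cast; linear_combination (-25/324)*h2

lemma d05 : torusDist (pts 0) (pts 5) = 5*Real.sqrt 2/18 := by
  have h2 : Real.sqrt 2 ^ 2 = 2 := Real.sq_sqrt (by norm_num)
  show torusDist ((0 : ℝ), (0 : ℝ)) ((17/18 : ℝ), (7/18 : ℝ)) = 5*Real.sqrt 2/18
  refine (tdist (1) (0) (by norm_num [abs_le]) (by norm_num [abs_le])).trans (sqrtEq (by positivity) ?_)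
  push_cast; linear_combination (-25/324)*h2

lemma d12 : torusDist (pts 1) (pts 2) = Real.sqrt 2/3 := by
  have h2 : Real.sqrt 2 ^ 2 = 2 := Real.sq_sqrt (by norm_num)
  show torusDist ((6/18 : ℝ), (6/18 : ℝ)) ((12/18 : ℝ), (12/18 : ℝ)) = Real.sqrt 2/3
  refine (tdist (0) (0) (by norm_num [abs_le]) (by norm_num [abs_le])).trans (sqrtEq (by positivity) ?_)
  push_cast; linear_combination (-1/9)*h2

lemma d13 : torusDist (pts 1) (pts 3) = 5*Real.sqrt 2/18 := by
  have h2 : Real.sqrt 2 ^ 2 = 2 := Real.sq_sqrt (by norm_num)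
  show torusDist ((6/18 : ℝ), (6/18 : ℝ)) ((5/18 : ℝ), (13/18 : ℝ)) = 5*Real.sqrt 2/18
  refine (tdist (0) (0) (by norm_num [abs_le]) (by norm_num [abs_le])).trans (sqrtEq (by positivity) ?_)
  push_cast; linear_combination (-25/324)*h2

lemma d14 : torusDist (pts 1) (pts 4) = 5*Real.sqrt 2/18 := by
  have h2 : Real.sqrt 2 ^ 2 = 2 := Real.sq_sqrt (by norm_num)
  show torusDist ((6/18 : ℝ), (6/18 : ℝ)) ((11/18 : ℝ), (1/18 : ℝ)) = 5*Real.sqrt 2/18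
  refine (tdist (0) (0) (by norm_num [abs_le]) (by norm_num [abs_le])).trans (sqrtEq (by positivity) ?_)
  push_cast; linear_combination (-25/324)*h2

lemma d15 : torusDist (pts 1) (pts 5) = 5*Real.sqrt 2/18 := by
  have h2 : Real.sqrt 2 ^ 2 = 2 := Real.sq_sqrt (by norm_num)
  show torusDist ((6/18 : ℝ), (6/18 : ℝ)) ((17/18 : ℝ), (7/18 : ℝ)) = 5*Real.sqrt 2/18
  refine (tdist (1) (0) (by norm_num [abs_le]) (by norm_num [abs_le])).trans (sqrtEq (by positivity) ?_)
  push_cast; linear_combination (-25/324)*h2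

lemma d23 : torusDist (pts 2) (pts 3) = 5*Real.sqrt 2/18 := by
  have h2 : Real.sqrt 2 ^ 2 = 2 := Real.sq_sqrt (by norm_num)
  show torusDist ((12/18 : ℝ), (12/18 : ℝ)) ((5/18 : ℝ), (13/18 : ℝ)) = 5*Real.sqrt 2/18
  refine (tdist (0) (0) (by norm_num [abs_le]) (by norm_num [abs_le])).trans (sqrtEq (by positivity) ?_)
  push_cast; linear_combination (-25/324)*h2

lemma d24 : torusDist (pts 2) (pts 4) = 5*Real.sqrt 2/18 := by
  have h2 : Real.sqrt 2 ^ 2 = 2 := Real.sq_sqrt (by norm_num)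
  show torusDist ((12/18 : ℝ), (12/18 : ℝ)) ((11/18 : ℝ), (1/18 : ℝ)) = 5*Real.sqrt 2/18
  refine (tdist (0) (-1) (by norm_num [abs_le]) (by norm_num [abs_le])).trans (sqrtEq (by positivity) ?_)
  push_cast; linear_combination (-25/324)*h2

lemma d25 : torusDist (pts 2) (pts 5) = 5*Real.sqrt 2/18 := by
  have h2 : Real.sqrt 2 ^ 2 = 2 := Real.sq_sqrt (by norm_num)
  show torusDist ((12/18 : ℝ), (12/18 : ℝ)) ((17/18 : ℝ), (7/18 : ℝ)) = 5*Real.sqrt 2/18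
  refine (tdist (0) (0) (by norm_num [abs_le]) (by norm_num [abs_le])).trans (sqrtEq (by positivity) ?_)
  push_cast; linear_combination (-25/324)*h2

lemma d34 : torusDist (pts 3) (pts 4) = Real.sqrt 2/3 := by
  have h2 : Real.sqrt 2 ^ 2 = 2 := Real.sq_sqrt (by norm_num)
  show torusDist ((5/18 : ℝ), (13/18 : ℝ)) ((11/18 : ℝ), (1/18 : ℝ)) = Real.sqrt 2/3
  refine (tdist (0) (-1) (by norm_num [abs_le]) (by norm_num [abs_le])).trans (sqrtEq (by positivity) ?_)
  push_cast; linear_combination (-1/9)*h2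

lemma d35 : torusDist (pts 3) (pts 5) = Real.sqrt 2/3 := by
  have h2 : Real.sqrt 2 ^ 2 = 2 := Real.sq_sqrt (by norm_num)
  show torusDist ((5/18 : ℝ), (13/18 : ℝ)) ((17/18 : ℝ), (7/18 : ℝ)) = Real.sqrt 2/3
  refine (tdist (1) (0) (by norm_num [abs_le]) (by norm_num [abs_le])).trans (sqrtEq (by positivity) ?_)
  push_cast; linear_combination (-1/9)*h2

lemma d45 : torusDist (pts 4) (pts 5) = Real.sqrt 2/3 := by
  have h2 : Real.sqrt 2 ^ 2 = 2 := Real.sq_sqrt (by norm_num)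
  show torusDist ((11/18 : ℝ), (1/18 : ℝ)) ((17/18 : ℝ), (7/18 : ℝ)) = Real.sqrt 2/3
  refine (tdist (0) (0) (by norm_num [abs_le]) (by norm_num [abs_le])).trans (sqrtEq (by positivity) ?_)
  push_cast; linear_combination (-1/9)*h2
set_option maxHeartbeats 1000000 in
lemma key : ∀ i j : Fin 6, i ≠ j → torusDist (pts i) (pts j)
    = (if ((i:ℕ) < 3 ↔ (j:ℕ) < 3) then Real.sqrt 2/3 else 5*Real.sqrt 2/18) := by
  intro i j hij
  fin_cases i <;> fin_cases j
  · exact absurd rfl hij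
  · rw [if_pos (by decide)]; exact d01
  · rw [if_pos (by decide)]; exact d02
  · rw [if_neg (by decide)]; exact d03
  · rw [if_neg (by decide)]; exact d04
  · rw [if_neg (by decide)]; exact d05
  · rw [if_pos (by decide)]; exact (torusDist_symm _ _).trans d01
  · exact absurd rfl hij
  · rw [if_pos (by decide)]; exact d12
  · rw [if_neg (by decide)]; exact d13
  · rw [if_neg (by decide)]; exact d14
  · rw [if_neg (by decide)]; exact d15
  · rw [if_pos (by decide)]; exact (torusDist_symm _ _).trans d02
  · rw [if_pos (by decide)]; exact (torusDist_symm _ _).trans d12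
  · exact absurd rfl hij
  · rw [if_neg (by decide)]; exact d23
  · rw [if_neg (by decide)]; exact d24
  · rw [if_neg (by decide)]; exact d25
  · rw [if_neg (by decide)]; exact (torusDist_symm _ _).trans d03
  · rw [if_neg (by decide)]; exact (torusDist_symm _ _).trans d13
  · rw [if_neg (by decide)]; exact (torusDist_symm _ _).trans d23
  · exact absurd rfl hij
  · rw [if_pos (by decide)]; exact d34
  · rw [if_pos (by decide)]; exact d35
  · rw [if_neg (by decide)]; exact (torusDist_symm _ _).trans d04
  · rw [if_neg (by decide)]; exact (torusDist_symm _ _).trans d14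
  · rw [if_neg (by decide)]; exact (torusDist_symm _ _).trans d24
  · rw [if_pos (by decide)]; exact (torusDist_symm _ _).trans d34
  · exact absurd rfl hij
  · rw [if_pos (by decide)]; exact d45
  · rw [if_neg (by decide)]; exact (torusDist_symm _ _).trans d05
  · rw [if_neg (by decide)]; exact (torusDist_symm _ _).trans d15
  · rw [if_neg (by decide)]; exact (torusDist_symm _ _).trans d25
  · rw [if_pos (by decide)]; exact (torusDist_symm _ _).trans d35
  · rw [if_pos (by decide)]; exact (torusDist_symm _ _).trans d45
  · exact absurd rfl hij

def torusEquiv : Fin 6 ≃ (Fin 3 ⊕ Fin 3) where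
  toFun := ![Sum.inl 0, Sum.inl 1, Sum.inl 2, Sum.inr 0, Sum.inr 1, Sum.inr 2]
  invFun := Sum.elim (fun a => ⟨a.1, by omega⟩) (fun b => ⟨b.1 + 3, by omega⟩)
  left_inv := by decide
  right_inv := by decide

lemma hadj : ∀ a b : Fin 6,
    ((completeBipartiteGraph (Fin 3) (Fin 3)).Adj (torusEquiv a) (torusEquiv b)
      ↔ (a ≠ b ∧ (a ≠ b ∧ ¬(((a:ℕ) < 3) ↔ ((b:ℕ) < 3))
            ∨ b ≠ a ∧ ¬(((b:ℕ) < 3) ↔ ((a:ℕ) < 3))))) := by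
  have h : ∀ a b : Fin 6,
      (((torusEquiv a).isLeft ∧ (torusEquiv b).isRight
          ∨ (torusEquiv a).isRight ∧ (torusEquiv b).isLeft)
        ↔ (a ≠ b ∧ (a ≠ b ∧ ¬(((a:ℕ) < 3) ↔ ((b:ℕ) < 3))
            ∨ b ≠ a ∧ ¬(((b:ℕ) < 3) ↔ ((a:ℕ) < 3))))) := by decide
  exact h

/-- There exist six points on the flat unit square torus, pairwise distinct in the
quotient `ℝ²/ℤ²`, whose minimum pairwise toroidal distance is `5√2/18`, and such
that the graph with an edge between two points exactly when their toroidal distance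
equals `5√2/18` is isomorphic to the complete bipartite graph `K₃,₃`; hence `K₃,₃`
is realizable as a toroidal penny graph with circles of diameter `5√2/18`. -/
theorem K33_is_toroidal_penny_graph :
    ∃ q : Fin 6 → ℝ × ℝ,
      (∀ i j : Fin 6, i ≠ j → torusDist (q i) (q j) ≠ 0) ∧
      IsLeast {d : ℝ | ∃ i j : Fin 6, i ≠ j ∧ d = torusDist (q i) (q j)}
        (5 * Real.sqrt 2 / 18) ∧
      Nonempty
        ((SimpleGraph.fromRel fun i j =>
            torusDist (q i) (q j) = 5 * Real.sqrt 2 / 18) ≃g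
          completeBipartiteGraph (Fin 3) (Fin 3)) := by
  have hs : 0 < Real.sqrt 2 := Real.sqrt_pos.mpr (by norm_num)
  have hd1pos : (0:ℝ) < 5 * Real.sqrt 2 / 18 := by positivity
  have hd1lt : 5 * Real.sqrt 2 / 18 < Real.sqrt 2 / 3 := by linarith
  have hrul : ∀ i j : Fin 6, (torusDist (pts i) (pts j) = 5 * Real.sqrt 2 / 18
      ↔ (i ≠ j ∧ ¬(((i:ℕ) < 3) ↔ ((j:ℕ) < 3)))) := by
    intro i j
    rcases eq_or_ne i j with rfl | hij
    · simp [torusDist_self, hd1pos.ne]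
    · rw [key i j hij]
      split_ifs with hc
      · simp [hij, hc, hd1lt.ne']
      · simp [hij, hc]
  refine ⟨pts, ?_, ⟨⟨0, 3, by decide, ?_⟩, ?_⟩, ?_⟩
  · intro i j hij
    rw [key i j hij]
    split_ifs <;> positivity
  · rw [key 0 3 (by decide), if_neg (by decide)]
  · rintro d ⟨i, j, hij, rfl⟩
    rw [key i j hij]
    split_ifs
    · linarith
    · exact le_refl _
  · refine ⟨⟨torusEquiv, ?_⟩⟩
    intro a b
    simp only [SimpleGraph.fromRel_adj, hrul]
    exact hadj a b
end

section
/- Let l = (1 + 3√3 − √(4 + 6√3))/6. There exist six points on the flat unit square torus (pairwise distinct in the quotient ℝ²/ℤ²) whose minimum pairwise toroidal distance equals l, and such that each of the six points is at toroidal distance exactly l from exactly four of the other five points (the remaining pair being at distance strictly greater than l). Consequently the contact graph of the corresponding packing of six circles of diameter l is the 4-regular octahedral graph K₂,₂,₂. -/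
namespace OctTorusAux

noncomputable def R3 : ℝ := Real.sqrt 3
noncomputable def T0 : ℝ := Real.sqrt (4 + 6 * Real.sqrt 3)
noncomputable def L0 : ℝ := (1 + 3 * Real.sqrt 3 - Real.sqrt (4 + 6 * Real.sqrt 3)) / 6
noncomputable def S0 : ℝ := Real.sqrt (L0 - 1/4)

lemma R3_nn : 0 ≤ R3 := Real.sqrt_nonneg _
lemma R3_sq : R3 ^ 2 = 3 := Real.sq_sqrt (by norm_num)
lemma R3_lb : 1.73205 < R3 := by nlinarith [R3_sq, R3_nn]
lemma R3_ub : R3 < 1.732051 := by nlinarith [R3_sq, R3_nn]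
lemma T0_nn : 0 ≤ T0 := Real.sqrt_nonneg _
lemma T0_sq : T0 ^ 2 = 4 + 6 * R3 := Real.sq_sqrt (by positivity)
lemma T0_lb : 3.7937 < T0 := by nlinarith [T0_sq, T0_nn, R3_lb]
lemma T0_ub : T0 < 3.7938 := by nlinarith [T0_sq, T0_nn, R3_ub]

lemma L0_def : L0 = (1 + 3 * R3 - T0) / 6 := rfl
lemma L0_lb : 0.40039 < L0 := by rw [L0_def]; linarith [R3_lb, T0_ub]
lemma L0_ub : L0 < 0.40041 := by rw [L0_def]; linarith [R3_ub, T0_lb]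
lemma L0_nn : 0 ≤ L0 := by linarith [L0_lb]
lemma L0_pos : 0 < L0 := by linarith [L0_lb]

lemma S0_nn : 0 ≤ S0 := Real.sqrt_nonneg _
lemma S0_sq : S0 ^ 2 = L0 - 1/4 := Real.sq_sqrt (by linarith [L0_lb])
lemma S0_lb : 0.3878 < S0 := by nlinarith [S0_sq, S0_nn, L0_lb]
lemma S0_ub : S0 < 0.38784 := by nlinarith [S0_sq, S0_nn, L0_ub]

lemma y1_lb : 0.3466 < R3 * L0 / 2 := by nlinarith [R3_lb, L0_lb, R3_ub, L0_ub]
lemma y1_ub : R3 * L0 / 2 < 0.3468 := by nlinarith [R3_lb, L0_lb, R3_ub, L0_ub]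

/-- The key polynomial identity satisfied by `l`. -/
lemma sq_key {r t : ℝ} (hr : r ^ 2 = 3) (ht : t ^ 2 = 4 + 6 * r) :
    4 * (1 - r * ((1 + 3*r - t)/6) / 2) ^ 2 * ((1 + 3*r - t)/6 - 1/4)
      = (1 + ((1 + 3*r - t)/6) / 2 - r * ((1 + 3*r - t)/6)) ^ 2 := by
  linear_combination
    (r^3/8 + r^2/16 - r^2*t/8 - r/2 + 7*r*t/72 + 221/432 + 35*t/216) * hr
    + (r^3/24 - r^2/48 - r^2*t/216 - r/12 - 1/144) * ht

lemma key : 2 * (1 - R3 * L0 / 2) * S0 = 1 + L0 / 2 - R3 * L0 := by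
  have h1 : 0 ≤ 2 * (1 - R3 * L0 / 2) * S0 := by
    have := y1_ub; have := S0_nn; nlinarith
  have h2 : 0 ≤ 1 + L0 / 2 - R3 * L0 := by
    have := y1_ub; have := L0_lb; nlinarith
  have hsq : (2 * (1 - R3 * L0 / 2) * S0) ^ 2 = (1 + L0 / 2 - R3 * L0) ^ 2 := by
    have e1 : (2 * (1 - R3 * L0 / 2) * S0) ^ 2
        = 4 * (1 - R3 * L0 / 2) ^ 2 * (L0 - 1/4) := by
      linear_combination (4 * (1 - R3 * L0 / 2) ^ 2) * S0_sq
    rw [e1, L0_def]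
    exact sq_key R3_sq T0_sq
  calc 2 * (1 - R3 * L0 / 2) * S0
      = Real.sqrt ((2 * (1 - R3 * L0 / 2) * S0) ^ 2) := (Real.sqrt_sq h1).symm
    _ = Real.sqrt ((1 + L0 / 2 - R3 * L0) ^ 2) := by rw [hsq]
    _ = 1 + L0 / 2 - R3 * L0 := Real.sqrt_sq h2

lemma hy5 : (1 - S0 - R3 * L0 / 2) ^ 2 = L0 ^ 2 - ((1 - L0)/2) ^ 2 := by
  linear_combination S0_sq + (L0 ^ 2 / 4) * R3_sq - key

/-- squares only grow when shifting by a nonzero integer, if `|a| ≤ 1/2`. -/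
lemma step_sq (a : ℝ) (k : ℤ) (h : |a| ≤ 1/2) : a ^ 2 ≤ (a + k) ^ 2 := by
  rcases eq_or_ne k 0 with hk | hk
  · simp [hk]
  · have h1 : (1 : ℝ) ≤ |(k : ℝ)| := by
      have : (1 : ℤ) ≤ |k| := Int.one_le_abs hk
      calc (1:ℝ) ≤ ((|k| : ℤ) : ℝ) := by exact_mod_cast this
        _ = |(k : ℝ)| := by push_cast; rfl
    have h2 : -(|a| * |(k : ℝ)|) ≤ a * k := by
      rw [← abs_mul]; exact neg_abs_le _
    have h3 : |a| * |(k : ℝ)| ≤ (1/2) * |(k : ℝ)| :=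
      mul_le_mul_of_nonneg_right h (abs_nonneg _)
    have h4 : |(k : ℝ)| ≤ |(k : ℝ)| ^ 2 := by nlinarith [abs_nonneg (k : ℝ)]
    nlinarith [sq_abs (k : ℝ)]

lemma torusDist_eq (p q : ℝ × ℝ) (m n : ℤ)
    (hx : |p.1 - q.1 + (m : ℝ)| ≤ 1/2) (hy : |p.2 - q.2 + (n : ℝ)| ≤ 1/2) :
    torusDist p q
      = Real.sqrt ((p.1 - q.1 + (m : ℝ)) ^ 2 + (p.2 - q.2 + (n : ℝ)) ^ 2) := by
  apply IsLeast.csInf_eq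
  constructor
  · exact ⟨m, n, rfl⟩
  · rintro d ⟨m', n', rfl⟩
    apply Real.sqrt_le_sqrt
    have hx2 := step_sq (p.1 - q.1 + (m : ℝ)) (m' - m) hx
    have hy2 := step_sq (p.2 - q.2 + (n : ℝ)) (n' - n) hy
    have e1 : p.1 - q.1 + (m : ℝ) + ((m' - m : ℤ) : ℝ) = p.1 - q.1 + (m' : ℝ) := by
      push_cast; ring
    have e2 : p.2 - q.2 + (n : ℝ) + ((n' - n : ℤ) : ℝ) = p.2 - q.2 + (n' : ℝ) := by
      push_cast; ring
    rw [e1] at hx2; rw [e2] at hy2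
    linarith

lemma torusDist_eq_val (p q : ℝ × ℝ) (m n : ℤ) (c : ℝ) (hc : 0 ≤ c)
    (hx : |p.1 - q.1 + (m : ℝ)| ≤ 1/2) (hy : |p.2 - q.2 + (n : ℝ)| ≤ 1/2)
    (hsq : (p.1 - q.1 + (m : ℝ)) ^ 2 + (p.2 - q.2 + (n : ℝ)) ^ 2 = c ^ 2) :
    torusDist p q = c := by
  rw [torusDist_eq p q m n hx hy, hsq, Real.sqrt_sq hc]

lemma torusDist_comm (p q : ℝ × ℝ) : torusDist p q = torusDist q p := by
  unfold torusDist
  congr 1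
  ext d
  constructor <;> rintro ⟨m, n, rfl⟩ <;> exact ⟨-m, -n, by push_cast; congr 1; ring⟩

noncomputable def q0 : ℝ × ℝ := (0, 0)
noncomputable def q1 : ℝ × ℝ := (1 - L0/2, R3 * L0 / 2)
noncomputable def q2 : ℝ × ℝ := (1 - L0, 0)
noncomputable def q3 : ℝ × ℝ := (1/2 - L0, 1 - S0)
noncomputable def q4 : ℝ × ℝ := (1/2, 1 - S0)
noncomputable def q5 : ℝ × ℝ := (1/2 - L0/2, 1 - S0 - R3 * L0 / 2)

lemma d01 : torusDist q0 q1 = L0 := by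
  apply torusDist_eq_val _ _ 1 0 _ L0_nn
  · simp only [q0, q1]; push_cast; rw [abs_le]
    constructor <;> nlinarith [L0_lb, L0_ub, S0_lb, S0_ub, y1_lb, y1_ub]
  · simp only [q0, q1]; push_cast; rw [abs_le]
    constructor <;> nlinarith [L0_lb, L0_ub, S0_lb, S0_ub, y1_lb, y1_ub]
  · simp only [q0, q1]; push_cast
    linear_combination (L0^2/4) * R3_sq

lemma d02 : torusDist q0 q2 = L0 := by
  apply torusDist_eq_val _ _ 1 0 _ L0_nn
  · simp only [q0, q2]; push_cast; rw [abs_le]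
    constructor <;> nlinarith [L0_lb, L0_ub, S0_lb, S0_ub, y1_lb, y1_ub]
  · simp only [q0, q2]; push_cast; rw [abs_le]
    constructor <;> nlinarith [L0_lb, L0_ub, S0_lb, S0_ub, y1_lb, y1_ub]
  · simp only [q0, q2]; push_cast
    ring

lemma d03 : torusDist q0 q3 = L0 := by
  apply torusDist_eq_val _ _ 0 1 _ L0_nn
  · simp only [q0, q3]; push_cast; rw [abs_le]
    constructor <;> nlinarith [L0_lb, L0_ub, S0_lb, S0_ub, y1_lb, y1_ub]
  · simp only [q0, q3]; push_cast; rw [abs_le]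
    constructor <;> nlinarith [L0_lb, L0_ub, S0_lb, S0_ub, y1_lb, y1_ub]
  · simp only [q0, q3]; push_cast
    linear_combination S0_sq

lemma d04 : torusDist q0 q4 = Real.sqrt L0 := by
  apply torusDist_eq_val _ _ 0 1 _ (Real.sqrt_nonneg _)
  · simp only [q0, q4]; push_cast; rw [abs_le]
    constructor <;> nlinarith [L0_lb, L0_ub, S0_lb, S0_ub, y1_lb, y1_ub]
  · simp only [q0, q4]; push_cast; rw [abs_le]
    constructor <;> nlinarith [L0_lb, L0_ub, S0_lb, S0_ub, y1_lb, y1_ub]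
  · simp only [q0, q4]; push_cast
    rw [Real.sq_sqrt L0_nn]; linear_combination S0_sq

lemma d05 : torusDist q0 q5 = L0 := by
  apply torusDist_eq_val _ _ 0 0 _ L0_nn
  · simp only [q0, q5]; push_cast; rw [abs_le]
    constructor <;> nlinarith [L0_lb, L0_ub, S0_lb, S0_ub, y1_lb, y1_ub]
  · simp only [q0, q5]; push_cast; rw [abs_le]
    constructor <;> nlinarith [L0_lb, L0_ub, S0_lb, S0_ub, y1_lb, y1_ub]
  · simp only [q0, q5]; push_cast
    linear_combination hy5

lemma d12 : torusDist q1 q2 = L0 := by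
  apply torusDist_eq_val _ _ 0 0 _ L0_nn
  · simp only [q1, q2]; push_cast; rw [abs_le]
    constructor <;> nlinarith [L0_lb, L0_ub, S0_lb, S0_ub, y1_lb, y1_ub]
  · simp only [q1, q2]; push_cast; rw [abs_le]
    constructor <;> nlinarith [L0_lb, L0_ub, S0_lb, S0_ub, y1_lb, y1_ub]
  · simp only [q1, q2]; push_cast
    linear_combination (L0^2/4) * R3_sq

lemma d13 : torusDist q1 q3 = L0 := by
  apply torusDist_eq_val _ _ (-1) 0 _ L0_nn
  · simp only [q1, q3]; push_cast; rw [abs_le]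
    constructor <;> nlinarith [L0_lb, L0_ub, S0_lb, S0_ub, y1_lb, y1_ub]
  · simp only [q1, q3]; push_cast; rw [abs_le]
    constructor <;> nlinarith [L0_lb, L0_ub, S0_lb, S0_ub, y1_lb, y1_ub]
  · simp only [q1, q3]; push_cast
    linear_combination hy5

lemma d14 : torusDist q1 q4 = L0 := by
  apply torusDist_eq_val _ _ 0 0 _ L0_nn
  · simp only [q1, q4]; push_cast; rw [abs_le]
    constructor <;> nlinarith [L0_lb, L0_ub, S0_lb, S0_ub, y1_lb, y1_ub]
  · simp only [q1, q4]; push_cast; rw [abs_le]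
    constructor <;> nlinarith [L0_lb, L0_ub, S0_lb, S0_ub, y1_lb, y1_ub]
  · simp only [q1, q4]; push_cast
    linear_combination hy5

lemma d15 : torusDist q1 q5 = Real.sqrt (1/4 + (R3 * L0 + S0 - 1)^2) := by
  apply torusDist_eq_val _ _ 0 0 _ (Real.sqrt_nonneg _)
  · simp only [q1, q5]; push_cast; rw [abs_le]
    constructor <;> nlinarith [L0_lb, L0_ub, S0_lb, S0_ub, y1_lb, y1_ub]
  · simp only [q1, q5]; push_cast; rw [abs_le]
    constructor <;> nlinarith [L0_lb, L0_ub, S0_lb, S0_ub, y1_lb, y1_ub]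
  · simp only [q1, q5]; push_cast
    rw [Real.sq_sqrt (by positivity)]; ring

lemma d23 : torusDist q2 q3 = Real.sqrt L0 := by
  apply torusDist_eq_val _ _ 0 1 _ (Real.sqrt_nonneg _)
  · simp only [q2, q3]; push_cast; rw [abs_le]
    constructor <;> nlinarith [L0_lb, L0_ub, S0_lb, S0_ub, y1_lb, y1_ub]
  · simp only [q2, q3]; push_cast; rw [abs_le]
    constructor <;> nlinarith [L0_lb, L0_ub, S0_lb, S0_ub, y1_lb, y1_ub]
  · simp only [q2, q3]; push_cast
    rw [Real.sq_sqrt L0_nn]; linear_combination S0_sq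

lemma d24 : torusDist q2 q4 = L0 := by
  apply torusDist_eq_val _ _ 0 1 _ L0_nn
  · simp only [q2, q4]; push_cast; rw [abs_le]
    constructor <;> nlinarith [L0_lb, L0_ub, S0_lb, S0_ub, y1_lb, y1_ub]
  · simp only [q2, q4]; push_cast; rw [abs_le]
    constructor <;> nlinarith [L0_lb, L0_ub, S0_lb, S0_ub, y1_lb, y1_ub]
  · simp only [q2, q4]; push_cast
    linear_combination S0_sq

lemma d25 : torusDist q2 q5 = L0 := by
  apply torusDist_eq_val _ _ 0 0 _ L0_nn
  · simp only [q2, q5]; push_cast; rw [abs_le]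
    constructor <;> nlinarith [L0_lb, L0_ub, S0_lb, S0_ub, y1_lb, y1_ub]
  · simp only [q2, q5]; push_cast; rw [abs_le]
    constructor <;> nlinarith [L0_lb, L0_ub, S0_lb, S0_ub, y1_lb, y1_ub]
  · simp only [q2, q5]; push_cast
    linear_combination hy5

lemma d34 : torusDist q3 q4 = L0 := by
  apply torusDist_eq_val _ _ 0 0 _ L0_nn
  · simp only [q3, q4]; push_cast; rw [abs_le]
    constructor <;> nlinarith [L0_lb, L0_ub, S0_lb, S0_ub, y1_lb, y1_ub]
  · simp only [q3, q4]; push_cast; rw [abs_le]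
    constructor <;> nlinarith [L0_lb, L0_ub, S0_lb, S0_ub, y1_lb, y1_ub]
  · simp only [q3, q4]; push_cast
    ring

lemma d35 : torusDist q3 q5 = L0 := by
  apply torusDist_eq_val _ _ 0 0 _ L0_nn
  · simp only [q3, q5]; push_cast; rw [abs_le]
    constructor <;> nlinarith [L0_lb, L0_ub, S0_lb, S0_ub, y1_lb, y1_ub]
  · simp only [q3, q5]; push_cast; rw [abs_le]
    constructor <;> nlinarith [L0_lb, L0_ub, S0_lb, S0_ub, y1_lb, y1_ub]
  · simp only [q3, q5]; push_cast
    linear_combination (L0^2/4) * R3_sq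

lemma d45 : torusDist q4 q5 = L0 := by
  apply torusDist_eq_val _ _ 0 0 _ L0_nn
  · simp only [q4, q5]; push_cast; rw [abs_le]
    constructor <;> nlinarith [L0_lb, L0_ub, S0_lb, S0_ub, y1_lb, y1_ub]
  · simp only [q4, q5]; push_cast; rw [abs_le]
    constructor <;> nlinarith [L0_lb, L0_ub, S0_lb, S0_ub, y1_lb, y1_ub]
  · simp only [q4, q5]; push_cast
    linear_combination (L0^2/4) * R3_sq

lemma gt04v : L0 < Real.sqrt L0 := by
  nth_rewrite 1 [← Real.sqrt_sq L0_nn]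
  exact Real.sqrt_lt_sqrt (by positivity) (by nlinarith [L0_lb, L0_ub])

lemma gt15v : L0 < Real.sqrt (1/4 + (R3 * L0 + S0 - 1)^2) := by
  have h : Real.sqrt ((1/2)^2) ≤ Real.sqrt (1/4 + (R3 * L0 + S0 - 1)^2) :=
    Real.sqrt_le_sqrt (by nlinarith [sq_nonneg (R3 * L0 + S0 - 1)])
  rw [Real.sqrt_sq (by norm_num)] at h
  linarith [L0_ub]

lemma d10 : torusDist q1 q0 = L0 := by rw [torusDist_comm]; exact d01
lemma d20 : torusDist q2 q0 = L0 := by rw [torusDist_comm]; exact d02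
lemma d30 : torusDist q3 q0 = L0 := by rw [torusDist_comm]; exact d03
lemma d50 : torusDist q5 q0 = L0 := by rw [torusDist_comm]; exact d05
lemma d21 : torusDist q2 q1 = L0 := by rw [torusDist_comm]; exact d12
lemma d31 : torusDist q3 q1 = L0 := by rw [torusDist_comm]; exact d13
lemma d41 : torusDist q4 q1 = L0 := by rw [torusDist_comm]; exact d14
lemma d42 : torusDist q4 q2 = L0 := by rw [torusDist_comm]; exact d24
lemma d52 : torusDist q5 q2 = L0 := by rw [torusDist_comm]; exact d25
lemma d43 : torusDist q4 q3 = L0 := by rw [torusDist_comm]; exact d34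
lemma d53 : torusDist q5 q3 = L0 := by rw [torusDist_comm]; exact d35
lemma d54 : torusDist q5 q4 = L0 := by rw [torusDist_comm]; exact d45

lemma d40 : torusDist q4 q0 = Real.sqrt L0 := by rw [torusDist_comm]; exact d04
lemma d32 : torusDist q3 q2 = Real.sqrt L0 := by rw [torusDist_comm]; exact d23
lemma d51 : torusDist q5 q1 = Real.sqrt (1/4 + (R3 * L0 + S0 - 1)^2) := by
  rw [torusDist_comm]; exact d15
lemma g04 : L0 < torusDist q0 q4 := by rw [d04]; exact gt04v
lemma g40 : L0 < torusDist q4 q0 := by rw [d40]; exact gt04v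
lemma g23 : L0 < torusDist q2 q3 := by rw [d23]; exact gt04v
lemma g32 : L0 < torusDist q3 q2 := by rw [d32]; exact gt04v
lemma g15 : L0 < torusDist q1 q5 := by rw [d15]; exact gt15v
lemma g51 : L0 < torusDist q5 q1 := by rw [d51]; exact gt15v

noncomputable def Q : Fin 6 → ℝ × ℝ := fun i =>
  if i.val = 0 then q0 else if i.val = 1 then q1 else if i.val = 2 then q2
  else if i.val = 3 then q3 else if i.val = 4 then q4 else q5

def eqv : Fin 6 ≃ ((i : Fin 3) × Fin 2) where
  toFun i :=
    if i.val = 0 then ⟨0,0⟩ else if i.val = 1 then ⟨1,0⟩ else if i.val = 2 then ⟨2,0⟩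
    else if i.val = 3 then ⟨2,1⟩ else if i.val = 4 then ⟨0,1⟩ else ⟨1,1⟩
  invFun x :=
    if x.1.val = 0 then (if x.2.val = 0 then 0 else 4)
    else if x.1.val = 1 then (if x.2.val = 0 then 1 else 5)
    else (if x.2.val = 0 then 2 else 3)
  left_inv := by decide
  right_inv := by decide

end OctTorusAux

open OctTorusAux in
/-- With `l = (1 + 3√3 − √(4 + 6√3))/6`, there exist six points on the flat unit
square torus, pairwise distinct in the quotient `ℝ²/ℤ²`, whose minimum pairwise
toroidal distance equals `l`, such that each point is at toroidal distance exactly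
`l` from exactly four of the other five (the remaining pair being at distance
strictly greater than `l`); the contact graph of the corresponding packing of six
circles of diameter `l` is the 4-regular octahedral graph `K₂,₂,₂`. -/
theorem octahedral_toroidal_penny_graph :
    ∃ q : Fin 6 → ℝ × ℝ,
      let l : ℝ := (1 + 3 * Real.sqrt 3 - Real.sqrt (4 + 6 * Real.sqrt 3)) / 6
      (∀ i j : Fin 6, i ≠ j → torusDist (q i) (q j) ≠ 0) ∧
      IsLeast {d : ℝ | ∃ i j : Fin 6, i ≠ j ∧ d = torusDist (q i) (q j)} l ∧
      (∀ i : Fin 6,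
        (Finset.univ.filter fun j : Fin 6 =>
          j ≠ i ∧ torusDist (q i) (q j) = l).card = 4) ∧
      (∀ i j : Fin 6, i ≠ j → torusDist (q i) (q j) ≠ l →
        l < torusDist (q i) (q j)) ∧
      Nonempty
        ((SimpleGraph.fromRel fun i j => torusDist (q i) (q j) = l) ≃g
          SimpleGraph.completeMultipartiteGraph fun _ : Fin 3 => Fin 2) := by
  refine ⟨Q, ?_⟩
  show (∀ i j : Fin 6, i ≠ j → torusDist (Q i) (Q j) ≠ 0) ∧
      IsLeast {d : ℝ | ∃ i j : Fin 6, i ≠ j ∧ d = torusDist (Q i) (Q j)} L0 ∧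
      (∀ i : Fin 6,
        (Finset.univ.filter fun j : Fin 6 =>
          j ≠ i ∧ torusDist (Q i) (Q j) = L0).card = 4) ∧
      (∀ i j : Fin 6, i ≠ j → torusDist (Q i) (Q j) ≠ L0 →
        L0 < torusDist (Q i) (Q j)) ∧
      Nonempty
        ((SimpleGraph.fromRel fun i j => torusDist (Q i) (Q j) = L0) ≃g
          SimpleGraph.completeMultipartiteGraph fun _ : Fin 3 => Fin 2)
  have hb : ∀ i j : Fin 6, i ≠ j →
      torusDist (Q i) (Q j) = L0 ∨ L0 < torusDist (Q i) (Q j) := by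
    intro i j hij
    fin_cases i <;> fin_cases j
    · exact absurd rfl hij
    · exact Or.inl d01
    · exact Or.inl d02
    · exact Or.inl d03
    · exact Or.inr g04
    · exact Or.inl d05
    · exact Or.inl d10
    · exact absurd rfl hij
    · exact Or.inl d12
    · exact Or.inl d13
    · exact Or.inl d14
    · exact Or.inr g15
    · exact Or.inl d20
    · exact Or.inl d21
    · exact absurd rfl hij
    · exact Or.inr g23
    · exact Or.inl d24
    · exact Or.inl d25
    · exact Or.inl d30
    · exact Or.inl d31
    · exact Or.inr g32
    · exact absurd rfl hij
    · exact Or.inl d34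
    · exact Or.inl d35
    · exact Or.inr g40
    · exact Or.inl d41
    · exact Or.inl d42
    · exact Or.inl d43
    · exact absurd rfl hij
    · exact Or.inl d45
    · exact Or.inl d50
    · exact Or.inr g51
    · exact Or.inl d52
    · exact Or.inl d53
    · exact Or.inl d54
    · exact absurd rfl hij
  refine ⟨?_, ?_, ?_, ?_, ?_⟩
  · intro i j hij
    rcases hb i j hij with h | h
    · rw [h]; exact ne_of_gt L0_pos
    · intro h0; rw [h0] at h; exact absurd h (by linarith [L0_pos])
  · constructor
    · exact ⟨0, 1, by decide, d01.symm⟩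
    · rintro d ⟨i, j, hij, rfl⟩
      rcases hb i j hij with h | h
      · exact h.ge
      · exact h.le
  · intro i
    fin_cases i
    · show (Finset.univ.filter fun j : Fin 6 => j ≠ (0 : Fin 6) ∧ torusDist (Q 0) (Q j) = L0).card = 4
      have h : (Finset.univ.filter fun j : Fin 6 => j ≠ (0 : Fin 6) ∧ torusDist (Q 0) (Q j) = L0) = ({1, 2, 3, 5} : Finset (Fin 6)) := by
        ext j
        simp only [Finset.mem_filter, Finset.mem_univ, true_and]
        fin_cases j
        · exact iff_of_false (fun h => h.1 rfl) (by decide)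
        · exact iff_of_true ⟨by decide, d01⟩ (by decide)
        · exact iff_of_true ⟨by decide, d02⟩ (by decide)
        · exact iff_of_true ⟨by decide, d03⟩ (by decide)
        · exact iff_of_false (fun h => (g04).ne' h.2) (by decide)
        · exact iff_of_true ⟨by decide, d05⟩ (by decide)
      rw [h]; decide
    · show (Finset.univ.filter fun j : Fin 6 => j ≠ (1 : Fin 6) ∧ torusDist (Q 1) (Q j) = L0).card = 4
      have h : (Finset.univ.filter fun j : Fin 6 => j ≠ (1 : Fin 6) ∧ torusDist (Q 1) (Q j) = L0) = ({0, 2, 3, 4} : Finset (Fin 6)) := by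
        ext j
        simp only [Finset.mem_filter, Finset.mem_univ, true_and]
        fin_cases j
        · exact iff_of_true ⟨by decide, d10⟩ (by decide)
        · exact iff_of_false (fun h => h.1 rfl) (by decide)
        · exact iff_of_true ⟨by decide, d12⟩ (by decide)
        · exact iff_of_true ⟨by decide, d13⟩ (by decide)
        · exact iff_of_true ⟨by decide, d14⟩ (by decide)
        · exact iff_of_false (fun h => (g15).ne' h.2) (by decide)
      rw [h]; decide
    · show (Finset.univ.filter fun j : Fin 6 => j ≠ (2 : Fin 6) ∧ torusDist (Q 2) (Q j) = L0).card = 4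
      have h : (Finset.univ.filter fun j : Fin 6 => j ≠ (2 : Fin 6) ∧ torusDist (Q 2) (Q j) = L0) = ({0, 1, 4, 5} : Finset (Fin 6)) := by
        ext j
        simp only [Finset.mem_filter, Finset.mem_univ, true_and]
        fin_cases j
        · exact iff_of_true ⟨by decide, d20⟩ (by decide)
        · exact iff_of_true ⟨by decide, d21⟩ (by decide)
        · exact iff_of_false (fun h => h.1 rfl) (by decide)
        · exact iff_of_false (fun h => (g23).ne' h.2) (by decide)
        · exact iff_of_true ⟨by decide, d24⟩ (by decide)
        · exact iff_of_true ⟨by decide, d25⟩ (by decide)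
      rw [h]; decide
    · show (Finset.univ.filter fun j : Fin 6 => j ≠ (3 : Fin 6) ∧ torusDist (Q 3) (Q j) = L0).card = 4
      have h : (Finset.univ.filter fun j : Fin 6 => j ≠ (3 : Fin 6) ∧ torusDist (Q 3) (Q j) = L0) = ({0, 1, 4, 5} : Finset (Fin 6)) := by
        ext j
        simp only [Finset.mem_filter, Finset.mem_univ, true_and]
        fin_cases j
        · exact iff_of_true ⟨by decide, d30⟩ (by decide)
        · exact iff_of_true ⟨by decide, d31⟩ (by decide)
        · exact iff_of_false (fun h => (g32).ne' h.2) (by decide)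
        · exact iff_of_false (fun h => h.1 rfl) (by decide)
        · exact iff_of_true ⟨by decide, d34⟩ (by decide)
        · exact iff_of_true ⟨by decide, d35⟩ (by decide)
      rw [h]; decide
    · show (Finset.univ.filter fun j : Fin 6 => j ≠ (4 : Fin 6) ∧ torusDist (Q 4) (Q j) = L0).card = 4
      have h : (Finset.univ.filter fun j : Fin 6 => j ≠ (4 : Fin 6) ∧ torusDist (Q 4) (Q j) = L0) = ({1, 2, 3, 5} : Finset (Fin 6)) := by
        ext j
        simp only [Finset.mem_filter, Finset.mem_univ, true_and]
        fin_cases j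
        · exact iff_of_false (fun h => (g40).ne' h.2) (by decide)
        · exact iff_of_true ⟨by decide, d41⟩ (by decide)
        · exact iff_of_true ⟨by decide, d42⟩ (by decide)
        · exact iff_of_true ⟨by decide, d43⟩ (by decide)
        · exact iff_of_false (fun h => h.1 rfl) (by decide)
        · exact iff_of_true ⟨by decide, d45⟩ (by decide)
      rw [h]; decide
    · show (Finset.univ.filter fun j : Fin 6 => j ≠ (5 : Fin 6) ∧ torusDist (Q 5) (Q j) = L0).card = 4
      have h : (Finset.univ.filter fun j : Fin 6 => j ≠ (5 : Fin 6) ∧ torusDist (Q 5) (Q j) = L0) = ({0, 2, 3, 4} : Finset (Fin 6)) := by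
        ext j
        simp only [Finset.mem_filter, Finset.mem_univ, true_and]
        fin_cases j
        · exact iff_of_true ⟨by decide, d50⟩ (by decide)
        · exact iff_of_false (fun h => (g51).ne' h.2) (by decide)
        · exact iff_of_true ⟨by decide, d52⟩ (by decide)
        · exact iff_of_true ⟨by decide, d53⟩ (by decide)
        · exact iff_of_true ⟨by decide, d54⟩ (by decide)
        · exact iff_of_false (fun h => h.1 rfl) (by decide)
      rw [h]; decide
  · intro i j hij hne
    rcases hb i j hij with h | h
    · exact absurd h hne
    · exact h
  · refine ⟨⟨eqv, @fun a b => ?_⟩⟩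
    fin_cases a <;> fin_cases b
    · exact iff_of_false (fun h => h rfl) (fun h => h.1 rfl)
    · exact iff_of_true (show ((0:Fin 3)) ≠ 1 by decide) ⟨by decide, Or.inl d01⟩
    · exact iff_of_true (show ((0:Fin 3)) ≠ 2 by decide) ⟨by decide, Or.inl d02⟩
    · exact iff_of_true (show ((0:Fin 3)) ≠ 2 by decide) ⟨by decide, Or.inl d03⟩
    · exact iff_of_false (fun h => h rfl) (fun h => h.2.elim (fun h2 => (g04).ne' h2) (fun h2 => (g40).ne' h2))
    · exact iff_of_true (show ((0:Fin 3)) ≠ 1 by decide) ⟨by decide, Or.inl d05⟩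
    · exact iff_of_true (show ((1:Fin 3)) ≠ 0 by decide) ⟨by decide, Or.inl d10⟩
    · exact iff_of_false (fun h => h rfl) (fun h => h.1 rfl)
    · exact iff_of_true (show ((1:Fin 3)) ≠ 2 by decide) ⟨by decide, Or.inl d12⟩
    · exact iff_of_true (show ((1:Fin 3)) ≠ 2 by decide) ⟨by decide, Or.inl d13⟩
    · exact iff_of_true (show ((1:Fin 3)) ≠ 0 by decide) ⟨by decide, Or.inl d14⟩
    · exact iff_of_false (fun h => h rfl) (fun h => h.2.elim (fun h2 => (g15).ne' h2) (fun h2 => (g51).ne' h2))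
    · exact iff_of_true (show ((2:Fin 3)) ≠ 0 by decide) ⟨by decide, Or.inl d20⟩
    · exact iff_of_true (show ((2:Fin 3)) ≠ 1 by decide) ⟨by decide, Or.inl d21⟩
    · exact iff_of_false (fun h => h rfl) (fun h => h.1 rfl)
    · exact iff_of_false (fun h => h rfl) (fun h => h.2.elim (fun h2 => (g23).ne' h2) (fun h2 => (g32).ne' h2))
    · exact iff_of_true (show ((2:Fin 3)) ≠ 0 by decide) ⟨by decide, Or.inl d24⟩
    · exact iff_of_true (show ((2:Fin 3)) ≠ 1 by decide) ⟨by decide, Or.inl d25⟩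
    · exact iff_of_true (show ((2:Fin 3)) ≠ 0 by decide) ⟨by decide, Or.inl d30⟩
    · exact iff_of_true (show ((2:Fin 3)) ≠ 1 by decide) ⟨by decide, Or.inl d31⟩
    · exact iff_of_false (fun h => h rfl) (fun h => h.2.elim (fun h2 => (g32).ne' h2) (fun h2 => (g23).ne' h2))
    · exact iff_of_false (fun h => h rfl) (fun h => h.1 rfl)
    · exact iff_of_true (show ((2:Fin 3)) ≠ 0 by decide) ⟨by decide, Or.inl d34⟩
    · exact iff_of_true (show ((2:Fin 3)) ≠ 1 by decide) ⟨by decide, Or.inl d35⟩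
    · exact iff_of_false (fun h => h rfl) (fun h => h.2.elim (fun h2 => (g40).ne' h2) (fun h2 => (g04).ne' h2))
    · exact iff_of_true (show ((0:Fin 3)) ≠ 1 by decide) ⟨by decide, Or.inl d41⟩
    · exact iff_of_true (show ((0:Fin 3)) ≠ 2 by decide) ⟨by decide, Or.inl d42⟩
    · exact iff_of_true (show ((0:Fin 3)) ≠ 2 by decide) ⟨by decide, Or.inl d43⟩
    · exact iff_of_false (fun h => h rfl) (fun h => h.1 rfl)
    · exact iff_of_true (show ((0:Fin 3)) ≠ 1 by decide) ⟨by decide, Or.inl d45⟩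
    · exact iff_of_true (show ((1:Fin 3)) ≠ 0 by decide) ⟨by decide, Or.inl d50⟩
    · exact iff_of_false (fun h => h rfl) (fun h => h.2.elim (fun h2 => (g51).ne' h2) (fun h2 => (g15).ne' h2))
    · exact iff_of_true (show ((1:Fin 3)) ≠ 2 by decide) ⟨by decide, Or.inl d52⟩
    · exact iff_of_true (show ((1:Fin 3)) ≠ 2 by decide) ⟨by decide, Or.inl d53⟩
    · exact iff_of_true (show ((1:Fin 3)) ≠ 0 by decide) ⟨by decide, Or.inl d54⟩
    · exact iff_of_false (fun h => h rfl) (fun h => h.1 rfl)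
end
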